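/- There is a one-to-one correspondence between the worldviews of an epistemic program Π and the worldviews of its normal form NF(Π): W is a worldview of NF(Π) if and only if the restriction of W to At(Π) is a worldview of Π, and this restriction map is injective on worldviews of NF(Π). -/

import Mathlib

/-! Framework for (epistemic) logic programs:
objective literals, rules, programs, reducts, stable models,
subjective literals, subjective reducts, worldviews, and the
generate-and-test programs T₀, G₀, kp, G₁. -/

/-- Extended objective literals over an atom type `α`:
an atom, a negated atom, a doubly negated atom, or a truth constant. -/
inductive Lit (α : Type) : Type
  | pos (a : α)
  | neg (a : α)
  | nneg (a : α)
  | top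
  | bot

namespace Lit

/-- Satisfaction of an extended objective literal by an interpretation. -/
def sat {α : Type} (I : Set α) : Lit α → Prop
  | .pos a => a ∈ I
  | .neg a => a ∉ I
  | .nneg a => a ∈ I
  | .top => True
  | .bot => False

/-- A literal is negated if it is of the form `¬a` or `¬¬a`. -/
def isNeg {α : Type} : Lit α → Prop
  | .neg _ => True
  | .nneg _ => True
  | _ => False

/-- Rename atoms in a literal. -/
def map {α β : Type} (f : α → β) : Lit α → Lit β
  | .pos a => .pos (f a)
  | .neg a => .neg (f a)
  | .nneg a => .nneg (f a)
  | .top => .top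
  | .bot => .bot

/-- The atoms occurring in a literal. -/
def atoms {α : Type} : Lit α → Set α
  | .pos a => {a}
  | .neg a => {a}
  | .nneg a => {a}
  | _ => ∅

end Lit

/-- An objective rule `a₁ ∨ ... ∨ aₙ ← L₁,...,Lₘ`. -/
structure Rule (α : Type) where
  head : Set α
  body : Set (Lit α)

/-- An objective program: a set of rules. -/
abbrev Program (α : Type) := Set (Rule α)

/-- A rule is satisfied by `I` if `I` satisfies some head atom
whenever it satisfies all body literals. -/
def Rule.sat {α : Type} (I : Set α) (r : Rule α) : Prop :=
  (∀ L ∈ r.body, L.sat I) → ∃ a ∈ r.head, a ∈ I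

/-- A model of a program satisfies all its rules. -/
def isModel {α : Type} (I : Set α) (P : Program α) : Prop := ∀ r ∈ P, r.sat I

/-- The reduct of a program with respect to `I`: drop rules with an unsatisfied
negated body literal; delete negated literals from the remaining rules. -/
def reduct {α : Type} (P : Program α) (I : Set α) : Program α :=
  { r' | ∃ r ∈ P, (∀ L ∈ r.body, L.isNeg → L.sat I) ∧
      r' = ⟨r.head, {L | L ∈ r.body ∧ ¬ L.isNeg}⟩ }

/-- `I` is a stable model of `P` iff it is a ⊆-minimal model of the reduct `P^I`. -/
def isStable {α : Type} (P : Program α) (I : Set α) : Prop :=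
  isModel I (reduct P I) ∧ ∀ J ⊆ I, isModel J (reduct P I) → J = I

/-- The set of stable models of a program. -/
def SM {α : Type} (P : Program α) : Set (Set α) := { I | isStable P I }

/-- A program extended with assumption constraints `⊥ ← ¬a` (for `a ∈ Apos`)
and `⊥ ← a` (for `a ∈ Aneg`). -/
def withAssumption {α : Type} (P : Program α) (Apos Aneg : Set α) : Program α :=
  P ∪ ((fun a => (⟨∅, {Lit.neg a}⟩ : Rule α)) '' Apos)
    ∪ ((fun a => (⟨∅, {Lit.pos a}⟩ : Rule α)) '' Aneg)

/-- Stable models of `P` under an assumption. -/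
def SMA {α : Type} (P : Program α) (Apos Aneg : Set α) : Set (Set α) :=
  SM (withAssumption P Apos Aneg)

/-- Literals of epistemic programs: an objective literal, or a subjective
atom `K l` preceded by zero, one, or two negations. -/
inductive SLit (α : Type) : Type
  | obj (l : Lit α)
  | k (l : Lit α)
  | nk (l : Lit α)
  | nnk (l : Lit α)

/-- An epistemic rule. -/
structure ERule (α : Type) where
  head : Set α
  body : Set (SLit α)

/-- An epistemic program: a set of epistemic rules. -/
abbrev EProgram (α : Type) := Set (ERule α)

/-- `W ⊨ K l`: every interpretation in `W` satisfies `l`. -/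
def satK {α : Type} (W : Set (Set α)) (l : Lit α) : Prop := ∀ I ∈ W, l.sat I

open scoped Classical in
/-- Replace a subjective literal by `⊤`/`⊥` according to `W`; objective
literals are unchanged. -/
noncomputable def SLit.reduce {α : Type} (W : Set (Set α)) : SLit α → Lit α
  | .obj l => l
  | .k l => if satK W l then .top else .bot
  | .nk l => if satK W l then .bot else .top
  | .nnk l => if satK W l then .top else .bot

/-- The subjective reduct `P^W`. -/
noncomputable def subjReduct {α : Type} (P : EProgram α) (W : Set (Set α)) : Program α :=
  (fun r : ERule α => (⟨r.head, (SLit.reduce W) '' r.body⟩ : Rule α)) '' P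

/-- A worldview: a non-empty set of interpretations `W` with `W = SM(P^W)`. -/
def isWorldview {α : Type} (P : EProgram α) (W : Set (Set α)) : Prop :=
  W.Nonempty ∧ W = SM (subjReduct P W)

/-- Normal-form subjective literals: `K a`, `¬K a`, `¬¬K a` with `a` an atom. -/
def SLit.isNormal {α : Type} : SLit α → Prop
  | .obj _ => True
  | .k (.pos _) => True
  | .nk (.pos _) => True
  | .nnk (.pos _) => True
  | _ => False

/-- A program is in normal form if negation does not occur in the scope of `K`. -/
def isNormalForm {α : Type} (P : EProgram α) : Prop :=
  ∀ r ∈ P, ∀ L ∈ r.body, L.isNormal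

/-- The atoms `a` such that a subjective atom `K a` occurs in the program; the
corresponding fresh atoms `ka` are represented as `Sum.inr a`. -/
def KAtoms {α : Type} (P : EProgram α) : Set α :=
  { a | ∃ r ∈ P, SLit.k (Lit.pos a) ∈ r.body ∨ SLit.nk (Lit.pos a) ∈ r.body ∨
        SLit.nnk (Lit.pos a) ∈ r.body }

/-- Replace subjective literals on `K a` by objective literals on the fresh
atom `ka = Sum.inr a`; original atoms become `Sum.inl a`. -/
def SLit.t0 {α : Type} : SLit α → Lit (α ⊕ α)
  | .obj l => l.map Sum.inl
  | .k (.pos a) => .pos (Sum.inr a)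
  | .nk (.pos a) => .neg (Sum.inr a)
  | .nnk (.pos a) => .nneg (Sum.inr a)
  | _ => .bot

/-- The tester program `T₀(P)`: `k(P)` plus a choice rule `{ka}`
(i.e. `ka ← ¬¬ka`) for each `ka ∈ K(P)`. -/
def T0 {α : Type} (P : EProgram α) : Program (α ⊕ α) :=
  ((fun r : ERule α => (⟨Sum.inl '' r.head, SLit.t0 '' r.body⟩ : Rule (α ⊕ α))) '' P)
  ∪ ((fun a => (⟨{Sum.inr a}, {Lit.nneg (Sum.inr a)}⟩ : Rule (α ⊕ α))) '' KAtoms P)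

/-- The generator program `G₀(P)`: `T₀(P)` plus consistency constraints
`⊥ ← ka, ¬a` for each `ka ∈ K(P)`. -/
def G0 {α : Type} (P : EProgram α) : Program (α ⊕ α) :=
  T0 P ∪ ((fun a => (⟨∅, {Lit.pos (Sum.inr a), Lit.neg (Sum.inl a)}⟩ : Rule (α ⊕ α))) '' KAtoms P)

/-- `k(M) = M ∩ K(P)`, read as a set of original atoms. -/
def kOfM {α : Type} (M : Set (α ⊕ α)) : Set α := { a | Sum.inr a ∈ M }

/-- `k(W) = {ka ∈ K(P) : W ⊨ K a}`, read as a set of original atoms. -/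
def kOfW {α : Type} (P : EProgram α) (W : Set (Set α)) : Set α :=
  { a | a ∈ KAtoms P ∧ ∀ I ∈ W, a ∈ I }

/-- Restriction of an interpretation to the original atoms `At(P)`. -/
def restr {α : Type} (M : Set (α ⊕ α)) : Set α := { a | Sum.inl a ∈ M }

/-- The positive part of the assumption determined by a set `S` of K-atoms:
`ka` for each `ka ∈ K(P)` with `a ∈ S`. -/
def asmP {α : Type} (P : EProgram α) (S : Set α) : Set (α ⊕ α) := Sum.inr '' (S ∩ KAtoms P)

/-- The negative part of the assumption determined by a set `S` of K-atoms:
`¬ka` for each `ka ∈ K(P)` with `a ∉ S`. -/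
def asmN {α : Type} (P : EProgram α) (S : Set α) : Set (α ⊕ α) := Sum.inr '' (KAtoms P \ S)

/-- A generator program for `P`. -/
def isGenerator {α : Type} (P : EProgram α) (G : Program (α ⊕ α)) : Prop :=
  (∀ W, isWorldview P W → ∃ M ∈ SM G, kOfM M = kOfW P W ∧ restr M ∈ W) ∧
  (∀ M ∈ SM G, ∀ W : Set (Set α), kOfW P W = kOfM M → restr M ∈ SM (subjReduct P W))

/-- A tester program for `P`: a non-empty `W` is a worldview of `P` iff
`W` equals the restriction to `At(P)` of `SM(T; k(W))`. -/
def isTester {α : Type} (P : EProgram α) (T : Program (α ⊕ α)) : Prop :=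
  ∀ W : Set (Set α), W.Nonempty →
    (isWorldview P W ↔ W = restr '' SMA T (asmP P (kOfW P W)) (asmN P (kOfW P W)))

/-- Atoms of the extended signature for the propagation program: original
atoms and `ka`-atoms (left) plus fresh atoms `kp_a`, `kn_a`, `kn_r` (right). -/
abbrev PExt (α : Type) : Type := (α ⊕ α) ⊕ (α ⊕ (α ⊕ ERule α))

/-- An original atom `a` in the extended signature. -/
def aE {α : Type} (a : α) : PExt α := Sum.inl (Sum.inl a)

/-- The atom `ka` in the extended signature. -/
def kaE {α : Type} (a : α) : PExt α := Sum.inl (Sum.inr a)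

/-- The fresh propagation atom `kp_a`. -/
def kpA {α : Type} (a : α) : PExt α := Sum.inr (Sum.inl a)

/-- The fresh propagation atom `kn_a`. -/
def knA {α : Type} (a : α) : PExt α := Sum.inr (Sum.inr (Sum.inl a))

/-- The fresh propagation atom `kn_r` for a rule `r`. -/
def knR {α : Type} (r : ERule α) : PExt α := Sum.inr (Sum.inr (Sum.inr r))

/-- Translation of a body literal for the rules defining `kp_a`. -/
def SLit.kpBody {α : Type} : SLit α → Lit (PExt α)
  | .obj (.pos a) => .pos (kpA a)
  | .obj (.neg a) => .pos (knA a)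
  | .k (.pos a) => .pos (kaE a)
  | .nk (.pos a) => .neg (kaE a)
  | .nnk (.pos a) => .nneg (kaE a)
  | _ => .bot

/-- Translation of a body literal for the rules defining `kn_r`
(the "complement" of the literal). -/
def SLit.knBody {α : Type} : SLit α → Lit (PExt α)
  | .obj (.pos a) => .pos (knA a)
  | .obj (.neg a) => .pos (kpA a)
  | .k (.pos a) => .neg (kaE a)
  | .nk (.pos a) => .pos (kaE a)
  | .nnk (.pos a) => .neg (kaE a)
  | _ => .top

/-- The atoms occurring in a subjective literal. -/
def SLit.atoms {α : Type} : SLit α → Set α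
  | .obj l => l.atoms
  | .k l => l.atoms
  | .nk l => l.atoms
  | .nnk l => l.atoms

/-- The atoms occurring in an epistemic program. -/
def AtE {α : Type} (P : EProgram α) : Set α :=
  { a | ∃ r ∈ P, a ∈ r.head ∨ ∃ L ∈ r.body, a ∈ L.atoms }

/-- The epistemic-propagation program `kp(P)`:
rules `kp_{a} ← ...` for single-atom-head rules, rules `kn_r ← ...` for all
rules, and completion rules `kn_a ← kn_{r₁},...,kn_{rₖ}`. -/
def kpProg {α : Type} (P : EProgram α) : Program (PExt α) :=
  { r' | ∃ r ∈ P, ∃ a : α, r.head = {a} ∧ r' = ⟨{kpA a}, SLit.kpBody '' r.body⟩ }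
  ∪ { r' | ∃ r ∈ P, ∃ L ∈ r.body, r' = ⟨{knR r}, {L.knBody}⟩ }
  ∪ { r' | ∃ a ∈ AtE P,
        r' = ⟨{knA a}, (fun r => Lit.pos (knR r)) '' { r ∈ P | a ∈ r.head }⟩ }

/-- Rename the atoms of a rule. -/
def Rule.mapAtoms {α β : Type} (f : α → β) (r : Rule α) : Rule β :=
  ⟨f '' r.head, (Lit.map f) '' r.body⟩

/-- `G₀(P)` viewed over the extended signature. -/
def G0ext {α : Type} (P : EProgram α) : Program (PExt α) :=
  (Rule.mapAtoms Sum.inl) '' (G0 P)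

/-- The generator program `G₁(P)`: `G₀(P)` together with the propagation
program `kp(P)` and consistency constraints `⊥ ← kp_a, ¬ka`. -/
def G1 {α : Type} (P : EProgram α) : Program (PExt α) :=
  G0ext P ∪ kpProg P
  ∪ { r' | ∃ a ∈ KAtoms P, r' = ⟨∅, {Lit.pos (kpA a), Lit.neg (kaE a)}⟩ }

/-- Atom signature for the normal form: original atoms (`Sum.inl a`), fresh
atoms `n_a` (`Sum.inr (Sum.inl a)`) and `nn_a` (`Sum.inr (Sum.inr a)`). -/
abbrev NFAt (α : Type) : Type := α ⊕ (α ⊕ α)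

/-- Transformation of the literal inside a subjective operator:
`¬a` becomes `n_a` and `¬¬a` becomes `nn_a`. -/
def innerNF {α : Type} : Lit α → Lit (NFAt α)
  | .neg a => .pos (Sum.inr (Sum.inl a))
  | .nneg a => .pos (Sum.inr (Sum.inr a))
  | l => l.map Sum.inl

/-- Normal-form transformation of a body literal. -/
def nfSLit {α : Type} : SLit α → SLit (NFAt α)
  | .obj l => .obj (l.map Sum.inl)
  | .k l => .k (innerNF l)
  | .nk l => .nk (innerNF l)
  | .nnk l => .nnk (innerNF l)

/-- `K ¬a` occurs (possibly under negations) in the program. -/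
def negKOccurs {α : Type} (P : EProgram α) (a : α) : Prop :=
  ∃ r ∈ P, ∃ L ∈ r.body,
    L = SLit.k (Lit.neg a) ∨ L = SLit.nk (Lit.neg a) ∨ L = SLit.nnk (Lit.neg a)

/-- `K ¬¬a` occurs (possibly under negations) in the program. -/
def nnegKOccurs {α : Type} (P : EProgram α) (a : α) : Prop :=
  ∃ r ∈ P, ∃ L ∈ r.body,
    L = SLit.k (Lit.nneg a) ∨ L = SLit.nk (Lit.nneg a) ∨ L = SLit.nnk (Lit.nneg a)

/-- The normal form `NF(Π)`: replace `K¬a` by `K n_a` (adding `n_a ← ¬a`) and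
`K¬¬a` by `K nn_a` (adding `nn_a ← ¬¬a`). -/
def NF {α : Type} (P : EProgram α) : EProgram (NFAt α) :=
  ((fun r : ERule α => (⟨Sum.inl '' r.head, nfSLit '' r.body⟩ : ERule (NFAt α))) '' P)
  ∪ { r' | ∃ a : α, negKOccurs P a ∧
        r' = ⟨{Sum.inr (Sum.inl a)}, {SLit.obj (Lit.neg (Sum.inl a))}⟩ }
  ∪ { r' | ∃ a : α, nnegKOccurs P a ∧
        r' = ⟨{Sum.inr (Sum.inr a)}, {SLit.obj (Lit.nneg (Sum.inl a))}⟩ }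

/-- Restriction of a set of interpretations over `NFAt α` to the original atoms. -/
def restrNF {α : Type} (W : Set (Set (NFAt α))) : Set (Set α) :=
  (fun I => { a : α | Sum.inl a ∈ I }) '' W

/-! The rules `n_a ← ¬a` and `nn_a ← ¬¬a` define the fresh atoms from the original ones, so the
stable models of `NF(Π)^W` are exactly the canonical extensions
`J ∪ {n_a | a ∉ J} ∪ {nn_a | a ∈ J}` of the stable models `J` of an objective program over
`At(Π)`; in particular every worldview of `NF(Π)` consists of canonical extensions. On a set of
canonical extensions `K n_a` holds iff `K ¬a` holds of the restrictions, and likewise for `nn_a`,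
so `NF(Π)^W` is `Π^V` plus the defining rules, where `V` is the restriction of `W`. Hence
restriction and extension are mutually inverse bijections between the worldviews. -/

namespace Lit

variable {α β : Type}

@[simp]
theorem sat_map (f : α → β) (I : Set β) (l : Lit α) : (l.map f).sat I ↔ l.sat (f ⁻¹' I) := by
  cases l <;> rfl

@[simp]
theorem isNeg_map (f : α → β) (l : Lit α) : (l.map f).isNeg ↔ l.isNeg := by
  cases l <;> rfl

end Lit

section Reduct

variable {α β : Type}

theorem isModel_reduct_iff (Q : Program α) (I J : Set α) :
    isModel J (reduct Q I) ↔ ∀ r ∈ Q, (∀ L ∈ r.body, L.isNeg → L.sat I) →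
      (∀ L ∈ r.body, ¬ L.isNeg → L.sat J) → ∃ a ∈ r.head, a ∈ J := by
  constructor
  · intro h r hr hneg hpos
    exact h ⟨r.head, {L | L ∈ r.body ∧ ¬ L.isNeg}⟩ ⟨r, hr, hneg, rfl⟩ fun L hL => hpos L hL.1 hL.2
  · rintro h _ ⟨r, hr, hneg, rfl⟩ hpos
    exact h r hr hneg fun L hL hL' => hpos L ⟨hL, hL'⟩

theorem isModel_reduct_union (Q₁ Q₂ : Program α) (I J : Set α) :
    isModel J (reduct (Q₁ ∪ Q₂) I) ↔ isModel J (reduct Q₁ I) ∧ isModel J (reduct Q₂ I) := by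
  simp only [isModel_reduct_iff, Set.mem_union, or_imp, forall_and]

theorem isModel_reduct_image_mapAtoms (f : α → β) (Q : Program α) (I J : Set β) :
    isModel J (reduct (Rule.mapAtoms f '' Q) I) ↔ isModel (f ⁻¹' J) (reduct Q (f ⁻¹' I)) := by
  simp [isModel_reduct_iff, Rule.mapAtoms]

end Reduct

namespace NF

variable {α : Type} {P : EProgram α}

/-- `n_a` for `a ∉ J` and `nn_a` for `a ∈ J`, as far as `K ¬a`, resp. `K ¬¬a`, occurs in `P`. -/
def freshAtoms (P : EProgram α) (J : Set α) : Set (NFAt α) :=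
  (Sum.inr ∘ Sum.inl) '' {a | negKOccurs P a ∧ a ∉ J} ∪
    (Sum.inr ∘ Sum.inr) '' {a | nnegKOccurs P a ∧ a ∈ J}

def extend (P : EProgram α) (J : Set α) : Set (NFAt α) :=
  Sum.inl '' J ∪ freshAtoms P J

def freshRules (P : EProgram α) : Program (NFAt α) :=
  (fun a => ⟨{Sum.inr (Sum.inl a)}, {Lit.neg (Sum.inl a)}⟩) '' {a | negKOccurs P a} ∪
    (fun a => ⟨{Sum.inr (Sum.inr a)}, {Lit.nneg (Sum.inl a)}⟩) '' {a | nnegKOccurs P a}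

@[simp]
theorem preimage_inl_freshAtoms (J : Set α) : Sum.inl ⁻¹' freshAtoms P J = ∅ := by
  ext; simp [freshAtoms]

theorem preimage_inl_image_union_freshAtoms (J K : Set α) :
    Sum.inl ⁻¹' (Sum.inl '' J ∪ freshAtoms P K) = J := by
  simp [Set.preimage_image_eq _ Sum.inl_injective]

@[simp]
theorem preimage_inl_extend (J : Set α) : Sum.inl ⁻¹' extend P J = J :=
  preimage_inl_image_union_freshAtoms J J

theorem extend_injective : Function.Injective (extend P) :=
  Function.LeftInverse.injective (g := (Sum.inl ⁻¹' ·)) preimage_inl_extend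

theorem restrNF_image_extend (V : Set (Set α)) : restrNF (extend P '' V) = V := by
  simp only [restrNF, Set.image_image]
  exact (Set.image_congr fun J _ => preimage_inl_extend J).trans (Set.image_id V)

theorem isModel_reduct_freshRules (I J : Set (NFAt α)) :
    isModel J (reduct (freshRules P) I) ↔ freshAtoms P (Sum.inl ⁻¹' I) ⊆ J := by
  simp only [freshAtoms, Set.union_subset_iff, Set.image_subset_iff]
  simp [isModel_reduct_iff, freshRules, Set.subset_def, Lit.isNeg, Lit.sat, or_imp, forall_and]

theorem isModel_reduct_lift_union (Q : Program α) (I J : Set (NFAt α)) :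
    isModel J (reduct (Rule.mapAtoms Sum.inl '' Q ∪ freshRules P) I) ↔
      isModel (Sum.inl ⁻¹' J) (reduct Q (Sum.inl ⁻¹' I)) ∧ freshAtoms P (Sum.inl ⁻¹' I) ⊆ J := by
  rw [isModel_reduct_union, isModel_reduct_image_mapAtoms, isModel_reduct_freshRules]

theorem isModel_reduct_lift_union_extend (Q : Program α) (K : Set α) :
    isModel (extend P K) (reduct (Rule.mapAtoms Sum.inl '' Q ∪ freshRules P) (extend P K)) ↔
      isModel K (reduct Q K) := by
  rw [isModel_reduct_lift_union, preimage_inl_extend]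
  exact and_iff_left Set.subset_union_right

theorem SM_lift_union_freshRules (Q : Program α) :
    SM (Rule.mapAtoms Sum.inl '' Q ∪ freshRules P) = extend P '' SM Q := by
  ext I
  constructor
  · rintro ⟨hmod, hmin⟩
    obtain ⟨hQ, hfresh⟩ := (isModel_reduct_lift_union Q I I).mp hmod
    set K := Sum.inl ⁻¹' I
    have hext : extend P K = I :=
      hmin _ (Set.union_subset (Set.image_preimage_subset _ _) hfresh)
        ((isModel_reduct_lift_union Q I _).mpr
          ⟨by rwa [preimage_inl_extend], Set.subset_union_right⟩)
    refine ⟨K, ⟨hQ, fun J hJK hJ => ?_⟩, hext⟩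
    have hJ' : Sum.inl '' J ∪ freshAtoms P K = I := by
      refine hmin _ (Set.union_subset (Set.image_subset_iff.mpr hJK) hfresh) ?_
      rw [isModel_reduct_lift_union]
      exact ⟨by rwa [preimage_inl_image_union_freshAtoms], Set.subset_union_right⟩
    simpa only [preimage_inl_image_union_freshAtoms] using congrArg (Sum.inl ⁻¹' ·) hJ'
  · rintro ⟨K, ⟨hmod, hmin⟩, rfl⟩
    refine ⟨(isModel_reduct_lift_union_extend Q K).mpr hmod, fun J hJ hJmod => ?_⟩
    rw [isModel_reduct_lift_union, preimage_inl_extend] at hJmod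
    have hK : Sum.inl ⁻¹' J = K :=
      hmin _ (by simpa using Set.preimage_mono (f := Sum.inl) hJ) hJmod.1
    exact hJ.antisymm (Set.union_subset (hK ▸ Set.image_preimage_subset _ _) hJmod.2)

theorem sat_innerNF_extend {l : Lit α} (hneg : ∀ a, l = .neg a → negKOccurs P a)
    (hnneg : ∀ a, l = .nneg a → nnegKOccurs P a) (J : Set α) :
    (innerNF l).sat (extend P J) ↔ l.sat J := by
  cases l <;> simp_all [innerNF, extend, freshAtoms, Lit.sat, Lit.map]

theorem satK_extend_innerNF {l : Lit α} (hneg : ∀ a, l = .neg a → negKOccurs P a)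
    (hnneg : ∀ a, l = .nneg a → nnegKOccurs P a) (V : Set (Set α)) :
    satK (extend P '' V) (innerNF l) ↔ satK V l := by
  simp [satK, sat_innerNF_extend hneg hnneg]

theorem reduce_nfSLit_extend {r : ERule α} (hr : r ∈ P) {L : SLit α} (hL : L ∈ r.body)
    (V : Set (Set α)) :
    SLit.reduce (extend P '' V) (nfSLit L) = (SLit.reduce V L).map Sum.inl := by
  have hsatK : ∀ l, (L = .k l ∨ L = .nk l ∨ L = .nnk l) →
      (satK (extend P '' V) (innerNF l) ↔ satK V l) := fun l hl =>
    satK_extend_innerNF (fun a ha => ⟨r, hr, L, hL, by subst ha; exact hl⟩)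
      (fun a ha => ⟨r, hr, L, hL, by subst ha; exact hl⟩) V
  cases L with
  | obj l => rfl
  | _ l =>
    have hl := hsatK l (by simp)
    by_cases h : satK V l <;> simp [nfSLit, SLit.reduce, hl, h, Lit.map]

theorem exists_reduce_nfSLit_eq_map (W : Set (Set (NFAt α))) (L : SLit α) :
    ∃ l : Lit α, SLit.reduce W (nfSLit L) = l.map Sum.inl := by
  cases L with
  | obj l => exact ⟨l, rfl⟩
  | _ l => simp only [nfSLit, SLit.reduce]; split <;> first | exact ⟨.top, rfl⟩ | exact ⟨.bot, rfl⟩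

theorem subjReduct_NF_eq (W : Set (Set (NFAt α))) (g : SLit α → Lit α)
    (hg : ∀ r ∈ P, ∀ L ∈ r.body, SLit.reduce W (nfSLit L) = (g L).map Sum.inl) :
    subjReduct (NF P) W =
      Rule.mapAtoms Sum.inl '' ((fun r : ERule α => (⟨r.head, g '' r.body⟩ : Rule α)) '' P) ∪
        freshRules P := by
  simp only [subjReduct, NF, freshRules, Set.image_union, Set.image_image, Set.union_assoc]
  congr 1
  · refine Set.image_congr fun r hr => ?_
    simp only [Rule.mapAtoms, Set.image_image]
    rw [Set.image_congr (hg r hr)]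
  · ext r
    simp [SLit.reduce]

theorem subjReduct_NF_image_extend (V : Set (Set α)) :
    subjReduct (NF P) (extend P '' V) = Rule.mapAtoms Sum.inl '' subjReduct P V ∪ freshRules P :=
  subjReduct_NF_eq _ _ fun _ hr _ hL => reduce_nfSLit_extend hr hL V

theorem exists_subjReduct_NF_eq (W : Set (Set (NFAt α))) :
    ∃ Q : Program α, subjReduct (NF P) W = Rule.mapAtoms Sum.inl '' Q ∪ freshRules P := by
  choose g hg using exists_reduce_nfSLit_eq_map W
  exact ⟨_, subjReduct_NF_eq W g fun _ _ L _ => hg L⟩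

theorem isWorldview_NF_image_extend_iff (V : Set (Set α)) :
    isWorldview (NF P) (extend P '' V) ↔ isWorldview P V := by
  rw [isWorldview, isWorldview, subjReduct_NF_image_extend, SM_lift_union_freshRules,
    Set.image_nonempty, (Set.image_injective.mpr extend_injective).eq_iff]

theorem eq_image_extend_restrNF {W : Set (Set (NFAt α))} (hW : isWorldview (NF P) W) :
    W = extend P '' restrNF W := by
  obtain ⟨Q, hQ⟩ := exists_subjReduct_NF_eq (P := P) W
  have hW' : W = extend P '' SM Q := hW.2.trans (by rw [hQ, SM_lift_union_freshRules])
  rw [hW', restrNF_image_extend]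

end NF

theorem normal_form_correspondence_general {α : Type} (P : EProgram α) :
    (∀ W : Set (Set (NFAt α)), isWorldview (NF P) W → isWorldview P (restrNF W))
    ∧ (∀ V : Set (Set α), isWorldview P V →
        ∃! W : Set (Set (NFAt α)), isWorldview (NF P) W ∧ restrNF W = V)
    ∧ Set.InjOn restrNF { W | isWorldview (NF P) W } := by
  refine ⟨fun W hW => ?_, fun V hV => ?_, fun W₁ h₁ W₂ h₂ h => ?_⟩
  · rw [← NF.isWorldview_NF_image_extend_iff, ← NF.eq_image_extend_restrNF hW]
    exact hW
  · refine ⟨NF.extend P '' V,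
      ⟨(NF.isWorldview_NF_image_extend_iff V).mpr hV, NF.restrNF_image_extend V⟩, ?_⟩
    rintro W ⟨hW, rfl⟩
    exact NF.eq_image_extend_restrNF hW
  · rw [NF.eq_image_extend_restrNF h₁, NF.eq_image_extend_restrNF h₂, h]

/-- one-to-one correspondence between worldviews of `Π` and of
`NF(Π)`: `W` is a worldview of `NF(Π)` iff its restriction to `At(Π)` is a
worldview of `Π` (each worldview of `Π` arising from exactly one worldview of
`NF(Π)`), and restriction is injective on worldviews of `NF(Π)`. -/
theorem normal_form_correspondence {α : Type} (P : EProgram α) (hfin : P.Finite) :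
    (∀ W : Set (Set (NFAt α)), isWorldview (NF P) W → isWorldview P (restrNF W))
    ∧ (∀ V : Set (Set α), isWorldview P V →
        ∃! W : Set (Set (NFAt α)), isWorldview (NF P) W ∧ restrNF W = V)
    ∧ Set.InjOn restrNF { W | isWorldview (NF P) W } :=
  normal_form_correspondence_general P
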